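/- For every u ∈ {1,…,d−1}, the matrix σ_y^{(0u)} = E_{0u} − E_{u0} belongs to 𝔪, the real Lie subalgebra of d×d complex matrices generated by 𝔥 ∪ 𝔥'. -/

import Mathlib

open scoped Matrix

attribute [local instance 100] LieRing.ofAssociativeRing

/-- The d×d Fourier matrix V with entries V_{jk} = ω^{jk}/√d, ω = exp(2πi/d). -/
noncomputable def fourierV (d : ℕ) : Matrix (Fin d) (Fin d) ℂ :=
  Matrix.of fun j k =>
    Complex.exp (2 * Real.pi * Complex.I / d) ^ ((j : ℕ) * (k : ℕ)) / (Real.sqrt d : ℂ)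

/-- σ_y^{(jk)} = E_{jk} − E_{kj}. -/
def sigmaY {d : ℕ} (j k : Fin d) : Matrix (Fin d) (Fin d) ℂ :=
  Matrix.single j k 1 - Matrix.single k j 1

/-- 𝔥: the diagonal matrices diag(iα₀,…,iα_{d−1}) with real αⱼ. -/
def diagLie (d : ℕ) : Set (Matrix (Fin d) (Fin d) ℂ) :=
  {A | ∃ α : Fin d → ℝ, A = Matrix.diagonal fun j => Complex.I * (α j : ℂ)}

/-- 𝔥' = V 𝔥 V⁻¹. -/
noncomputable def diagLieConj (d : ℕ) : Set (Matrix (Fin d) (Fin d) ℂ) :=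
  {A | ∃ B ∈ diagLie d, A = fourierV d * B * (fourierV d)⁻¹}

/-!
With ψ(x) = ωˣ, an additive character of `Fin d`, conjugation by `V` turns `diag(ψ(m t))ₘ` into
the cyclic shift `Pₜ = ∑ⱼ E_{j,j+t}`, by orthogonality of characters. Taking real and imaginary
parts of `ψ(m u)`, both `i (P_u + P_{-u})` and `P_u - P_{-u}` lie in 𝔥'. For `D = i E₀₀ ∈ 𝔥`,
`ad D` acts on `E₀ₖ` (`k ≠ 0`) by `i`, on `Eⱼ₀` (`j ≠ 0`) by `-i`, and kills all other matrix
units, which gives `σ_y^{(0u)} = -½ (⁅D, i (P_u + P_{-u})⁆ + ⁅D, ⁅D, P_u - P_{-u}⁆⁆)`.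
-/

open Complex Matrix
open scoped ComplexConjugate

lemma IsPrimitiveRoot.pow_mod {M : Type*} [CommMonoid M] {ζ : M} {k : ℕ}
    (h : IsPrimitiveRoot ζ k) (n : ℕ) : ζ ^ (n % k) = ζ ^ n :=
  h.eq_orderOf ▸ pow_mod_orderOf ζ n

lemma lie_diagonal_apply {n R : Type*} [Fintype n] [DecidableEq n] [CommRing R] (a : n → R)
    (M : Matrix n n R) (j k : n) : ⁅diagonal a, M⁆ j k = (a j - a k) * M j k := by
  rw [Ring.lie_def, Matrix.sub_apply, diagonal_mul, mul_diagonal]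
  ring

section Fourier

open Fin.CommRing

variable (d : ℕ) [NeZero d]

noncomputable def fourierChar : AddChar (Fin d) ℂ where
  toFun x := exp (2 * Real.pi * I / d) ^ (x : ℕ)
  map_zero_eq_one' := pow_zero _
  map_add_eq_mul' x y := by
    rw [Fin.val_add, (isPrimitiveRoot_exp d (NeZero.ne d)).pow_mod, pow_add]

lemma fourierChar_isPrimitive : (fourierChar d).IsPrimitive := by
  intro a ha h
  have h1 : fourierChar d a = 1 := by simpa using DFunLike.congr_fun h 1
  have hdvd := ((isPrimitiveRoot_exp d (NeZero.ne d)).pow_eq_one_iff_dvd _).mp h1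
  exact ha (Fin.ext (Nat.eq_zero_of_dvd_of_lt hdvd a.isLt))

lemma sum_fourierChar_mul (b : Fin d) :
    ∑ m, fourierChar d (m * b) = if b = 0 then (d : ℂ) else 0 := by
  rw [AddChar.sum_mulShift b (fourierChar_isPrimitive d), Fintype.card_fin, Nat.cast_ite,
    Nat.cast_zero]

lemma fourierV_apply (j k : Fin d) :
    fourierV d j k = fourierChar d (j * k) / (Real.sqrt d : ℂ) := by
  rw [fourierV, of_apply, ← (isPrimitiveRoot_exp d (NeZero.ne d)).pow_mod, ← Fin.val_mul]
  rfl

lemma fourierV_mul_diagonal_mul_conjTranspose_apply (β : Fin d → ℂ) (j k : Fin d) :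
    (fourierV d * diagonal β * (fourierV d)ᴴ) j k
      = (d : ℂ)⁻¹ * ∑ m, β m * fourierChar d (m * (j - k)) := by
  have hsqrt : (Real.sqrt d : ℂ) ^ 2 = d := by
    rw [← ofReal_pow, Real.sq_sqrt (Nat.cast_nonneg d), ofReal_natCast]
  rw [mul_apply, Finset.mul_sum]
  refine Finset.sum_congr rfl fun m _ => ?_
  rw [mul_diagonal, conjTranspose_apply, fourierV_apply, fourierV_apply, star_div₀, star_def,
    ← AddChar.map_neg_eq_conj, conj_ofReal, mul_sub, sub_eq_add_neg, AddChar.map_add_eq_mul,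
    mul_comm m j, mul_comm m k, ← neg_mul]
  field_simp
  rw [hsqrt]

lemma fourierV_mul_conjTranspose : fourierV d * (fourierV d)ᴴ = 1 := by
  ext j k
  have h := fourierV_mul_diagonal_mul_conjTranspose_apply d (fun _ => 1) j k
  rw [diagonal_one, Matrix.mul_one] at h
  simp only [h, one_apply, one_mul, sum_fourierChar_mul, sub_eq_zero]
  split_ifs <;> simp [NeZero.ne]

lemma fourierV_inv : (fourierV d)⁻¹ = (fourierV d)ᴴ :=
  inv_eq_right_inv (fourierV_mul_conjTranspose d)

def shiftMatrix (t : Fin d) : Matrix (Fin d) (Fin d) ℂ :=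
  of fun j k => if j + t = k then 1 else 0

lemma fourierV_mul_diagonal_fourierChar_mul_inv (t : Fin d) :
    fourierV d * diagonal (fun m => fourierChar d (m * t)) * (fourierV d)⁻¹ = shiftMatrix d t := by
  ext j k
  simp only [fourierV_inv, fourierV_mul_diagonal_mul_conjTranspose_apply,
    ← AddChar.map_add_eq_mul, ← mul_add, sum_fourierChar_mul, shiftMatrix, of_apply]
  simp only [show t + (j - k) = j + t - k by abel, sub_eq_zero]
  split_ifs <;> simp [NeZero.ne]

lemma shiftMatrix_sub_shiftMatrix_neg (t : Fin d) :
    shiftMatrix d t - shiftMatrix d (-t) = fourierV d *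
      diagonal (fun m => I * ((2 * (fourierChar d (m * t)).im : ℝ) : ℂ)) * (fourierV d)⁻¹ := by
  have h : (fun m => I * ((2 * (fourierChar d (m * t)).im : ℝ) : ℂ))
      = (fun m => fourierChar d (m * t) - fourierChar d (m * -t)) := by
    ext m
    rw [mul_neg, AddChar.map_neg_eq_conj, sub_conj, mul_comm]
  rw [h, ← diagonal_sub, mul_sub, sub_mul, fourierV_mul_diagonal_fourierChar_mul_inv,
    fourierV_mul_diagonal_fourierChar_mul_inv]

lemma I_smul_shiftMatrix_add_shiftMatrix_neg (t : Fin d) :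
    I • (shiftMatrix d t + shiftMatrix d (-t)) = fourierV d *
      diagonal (fun m => I * ((2 * (fourierChar d (m * t)).re : ℝ) : ℂ)) * (fourierV d)⁻¹ := by
  have h : (fun m => I * ((2 * (fourierChar d (m * t)).re : ℝ) : ℂ))
      = I • (fun m => fourierChar d (m * t) + fourierChar d (m * -t)) := by
    ext m
    rw [Pi.smul_apply, mul_neg, AddChar.map_neg_eq_conj, add_conj, smul_eq_mul]
  rw [h, diagonal_smul, ← diagonal_add, Matrix.mul_smul, Matrix.smul_mul, mul_add, add_mul,
    fourierV_mul_diagonal_fourierChar_mul_inv, fourierV_mul_diagonal_fourierChar_mul_inv]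

end Fourier

def iSingleZero (d : ℕ) [NeZero d] : Matrix (Fin d) (Fin d) ℂ :=
  diagonal fun j => I * ((Pi.single 0 1 : Fin d → ℝ) j : ℂ)

lemma sigmaY_zero_eq_lie (d : ℕ) [NeZero d] (u : Fin d) :
    sigmaY 0 u = (-(1 / 2) : ℝ) •
      (⁅iSingleZero d, I • (shiftMatrix d u + shiftMatrix d (-u))⁆
        + ⁅iSingleZero d, ⁅iSingleZero d, shiftMatrix d u - shiftMatrix d (-u)⁆⁆) := by
  ext j k
  simp only [iSingleZero, Matrix.smul_apply, Matrix.add_apply, Matrix.sub_apply,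
    lie_diagonal_apply, shiftMatrix, of_apply, sigmaY, single_apply]
  by_cases hj : j = 0 <;> by_cases hk : k = 0
  · subst hj hk; simp
  · subst hj; simp [hk, Ne.symm hk]; ring_nf; simp only [I_sq]; ring
  · subst hk; simp [hj, Ne.symm hj, add_neg_eq_zero, eq_comm]; ring_nf; simp only [I_sq]; ring
  · simp [hj, hk, Ne.symm hj, Ne.symm hk]

theorem sigmaY_zero_u_mem_lieSpan_general (d : ℕ) [NeZero d] (u : Fin d) :
    sigmaY (0 : Fin d) u ∈
      LieSubalgebra.lieSpan ℝ (Matrix (Fin d) (Fin d) ℂ) (diagLie d ∪ diagLieConj d) := by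
  set 𝔪 := LieSubalgebra.lieSpan ℝ (Matrix (Fin d) (Fin d) ℂ) (diagLie d ∪ diagLieConj d)
  have hD : iSingleZero d ∈ 𝔪 := LieSubalgebra.subset_lieSpan (Or.inl ⟨_, rfl⟩)
  have hcos : I • (shiftMatrix d u + shiftMatrix d (-u)) ∈ 𝔪 := LieSubalgebra.subset_lieSpan
    (Or.inr ⟨_, ⟨_, rfl⟩, I_smul_shiftMatrix_add_shiftMatrix_neg d u⟩)
  have hsin : shiftMatrix d u - shiftMatrix d (-u) ∈ 𝔪 := LieSubalgebra.subset_lieSpan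
    (Or.inr ⟨_, ⟨_, rfl⟩, shiftMatrix_sub_shiftMatrix_neg d u⟩)
  rw [sigmaY_zero_eq_lie]
  exact 𝔪.smul_mem _ (𝔪.add_mem (𝔪.lie_mem hD hcos) (𝔪.lie_mem hD (𝔪.lie_mem hD hsin)))

/-- For every u ∈ {1,…,d−1}, σ_y^{(0u)} = E_{0u} − E_{u0} belongs to the real
    Lie subalgebra 𝔪 generated by 𝔥 ∪ 𝔥'. -/
theorem sigmaY_zero_u_mem_lieSpan (d : ℕ) [NeZero d] (u : Fin d) (hu : 1 ≤ (u : ℕ)) :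
    sigmaY (0 : Fin d) u ∈
      LieSubalgebra.lieSpan ℝ (Matrix (Fin d) (Fin d) ℂ) (diagLie d ∪ diagLieConj d) :=
  sigmaY_zero_u_mem_lieSpan_general d u
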